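/- Let Z and Zⁱ (i = 1, 2, …) be complete metric spaces with Z nonempty, φⁱ : Z → Zⁱ isometric embeddings, and let d be the pseudodistance on ⊔_{i=1}^∞ Zⁱ equal to d_{Zⁱ} on each piece and given by d(z, z') = inf_{z̄ ∈ Z} (d_{Zⁱ}(z, φⁱ(z̄)) + d_{Zʲ}(φʲ(z̄), z')) for z ∈ Zⁱ, z' ∈ Zʲ, i ≠ j. Let {z_n} be a sequence with z_n ∈ Z^{i(n)} for a strictly increasing sequence of indices i(n), which is Cauchy for d. Then: (1) d_{Z^{i(n)}}(z_n, φ^{i(n)}(Z)) → 0 as n → ∞; (2) if z̄_n ∈ Z are chosen so that d_{Z^{i(n)}}(z_n, φ^{i(n)}(z̄_n)) < d_{Z^{i(n)}}(z_n, φ^{i(n)}(Z)) + 2^{-n}, then {z̄_n} is a Cauchy sequence in Z, and writing z̄ = lim z̄_n, one has d(φ^{i(n)}(z̄), z_n) → 0 as n → ∞. -/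

import Mathlib

/-!
A point of `W i` that is `d`-close to a point of another piece `W j` must be close to
`φ i (Z)`, since every path between the pieces passes through the copies of `Z`. Along a
`d`-Cauchy sequence whose pieces are pairwise distinct, `z n` is therefore close to
`φ (i n) (Z)`, and its near-projections `zbar n` are Cauchy in `Z` because the isometries
transport the triangle inequality `zbar m → z m → z n → zbar n` back to `Z`.
-/

open Filter

/-- Glued pseudodistance on the countable disjoint union `Σ i, W i` of metric spaces,
obtained from isometric embeddings `φ i : Z → W i` of a common metric space `Z`. -/
noncomputable def glueDistSigma {Z : Type*} [MetricSpace Z] {W : ℕ → Type*}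
    [∀ i, MetricSpace (W i)] (φ : ∀ i, Z → W i) : (Σ i, W i) → (Σ i, W i) → ℝ
  | ⟨i, z⟩, ⟨j, z'⟩ =>
    if h : i = j then dist (h ▸ z) z'
    else ⨅ x : Z, (dist z (φ i x) + dist (φ j x) z')

open Topology Metric

section GlueDistSigma

variable {Z : Type*} [MetricSpace Z] {W : ℕ → Type*} [∀ i, MetricSpace (W i)]
  (φ : ∀ i, Z → W i)

theorem glueDistSigma_self (i : ℕ) (z z' : W i) :
    glueDistSigma φ ⟨i, z⟩ ⟨i, z'⟩ = dist z z' := by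
  simp [glueDistSigma]

theorem glueDistSigma_of_ne {i j : ℕ} (hij : i ≠ j) (z : W i) (z' : W j) :
    glueDistSigma φ ⟨i, z⟩ ⟨j, z'⟩ = ⨅ x : Z, (dist z (φ i x) + dist (φ j x) z') := by
  simp [glueDistSigma, hij]

theorem glueDistSigma_nonneg (p q : Σ i, W i) : 0 ≤ glueDistSigma φ p q := by
  obtain ⟨i, z⟩ := p
  obtain ⟨j, z'⟩ := q
  by_cases hij : i = j
  · subst hij
    exact (glueDistSigma_self φ i z z').symm ▸ dist_nonneg
  · rw [glueDistSigma_of_ne φ hij]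
    exact Real.iInf_nonneg fun _ => by positivity

variable {φ}

theorem infDist_range_le_glueDistSigma [Nonempty Z] {i j : ℕ} (hij : i ≠ j) (z : W i)
    (z' : W j) : infDist z (Set.range (φ i)) ≤ glueDistSigma φ ⟨i, z⟩ ⟨j, z'⟩ := by
  rw [glueDistSigma_of_ne φ hij]
  exact le_ciInf fun x =>
    (infDist_le_dist_of_mem (Set.mem_range_self x)).trans (le_add_of_nonneg_right dist_nonneg)

theorem dist_le_add_glueDistSigma_add (hφ : ∀ i, Isometry (φ i)) {i j : ℕ} (z : W i)
    (z' : W j) (x y : Z) :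
    dist x y ≤ dist z (φ i x) + glueDistSigma φ ⟨i, z⟩ ⟨j, z'⟩ + dist z' (φ j y) := by
  by_cases hij : i = j
  · subst hij
    rw [glueDistSigma_self, ← (hφ i).dist_eq]
    linarith [dist_triangle4 (φ i x) z z' (φ i y), dist_comm (φ i x) z, dist_comm (φ i y) z']
  have : Nonempty Z := ⟨x⟩
  rw [glueDistSigma_of_ne φ hij]
  suffices dist x y - dist z (φ i x) - dist z' (φ j y) ≤
      ⨅ w : Z, (dist z (φ i w) + dist (φ j w) z') by linarith
  refine le_ciInf fun w => ?_
  have hxw := dist_triangle (φ i x) z (φ i w)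
  have hwy := dist_triangle (φ j w) z' (φ j y)
  rw [(hφ i).dist_eq] at hxw
  rw [(hφ j).dist_eq] at hwy
  linarith [dist_triangle x w y, dist_comm (φ i x) z]

end GlueDistSigma

theorem tendsto_prod_atTop_zero_of_forall_lt {f : ℕ → ℕ → ℝ} (hf0 : ∀ m n, 0 ≤ f m n)
    (hf : ∀ ε > 0, ∃ N, ∀ m n, N ≤ m → N ≤ n → f m n < ε) :
    Tendsto (fun p : ℕ × ℕ => f p.1 p.2) (atTop ×ˢ atTop) (𝓝 0) := by
  rw [prod_atTop_atTop_eq]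
  refine Metric.tendsto_atTop.2 fun ε hε => ?_
  obtain ⟨N, hN⟩ := hf ε hε
  refine ⟨(N, N), fun p hp => ?_⟩
  rw [Real.dist_0_eq_abs, abs_of_nonneg (hf0 _ _)]
  exact hN _ _ hp.1 hp.2

theorem glueSigma_cauchy_across_pieces_general {Z : Type*} [MetricSpace Z]
    [Nonempty Z] {W : ℕ → Type*} [∀ i, MetricSpace (W i)]
    (φ : ∀ i, Z → W i)
    (hφ : ∀ i, ∀ x y : Z, dist (φ i x) (φ i y) = dist x y)
    (i : ℕ → ℕ) (hi : StrictMono i) (z : ∀ n : ℕ, W (i n))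
    (hcauchy : ∀ ε > (0 : ℝ), ∃ N : ℕ, ∀ m n : ℕ, N ≤ m → N ≤ n →
      glueDistSigma φ ⟨i m, z m⟩ ⟨i n, z n⟩ < ε) :
    Tendsto (fun n => Metric.infDist (z n) (Set.range (φ (i n)))) atTop (nhds 0) ∧
    ∀ zbar : ℕ → Z,
      (∀ n, dist (z n) (φ (i n) (zbar n)) <
        Metric.infDist (z n) (Set.range (φ (i n))) + (2 : ℝ)⁻¹ ^ n) →
      CauchySeq zbar ∧
      ∀ zlim : Z, Tendsto zbar atTop (nhds zlim) →
        Tendsto (fun n => glueDistSigma φ ⟨i n, φ (i n) zlim⟩ ⟨i n, z n⟩)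
          atTop (nhds 0) := by
  have hiso : ∀ k, Isometry (φ k) := fun k => Isometry.of_dist_eq (hφ k)
  have hglue : Tendsto (fun p : ℕ × ℕ => glueDistSigma φ ⟨i p.1, z p.1⟩ ⟨i p.2, z p.2⟩)
      (atTop ×ˢ atTop) (𝓝 0) :=
    tendsto_prod_atTop_zero_of_forall_lt (fun _ _ => glueDistSigma_nonneg φ _ _) hcauchy
  have hinf : Tendsto (fun n => infDist (z n) (Set.range (φ (i n)))) atTop (𝓝 0) :=
    squeeze_zero (fun _ => infDist_nonneg)
      (fun n => infDist_range_le_glueDistSigma (hi n.lt_succ_self).ne _ _)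
      (hglue.comp (tendsto_id.prodMk (tendsto_add_atTop_nat 1)))
  refine ⟨hinf, fun zbar hzbar => ?_⟩
  have hpow := tendsto_pow_atTop_nhds_zero_of_lt_one (r := (2 : ℝ)⁻¹) (by norm_num)
    (by norm_num)
  have hproj : Tendsto (fun n => dist (z n) (φ (i n) (zbar n))) atTop (𝓝 0) :=
    squeeze_zero (fun _ => dist_nonneg) (fun n => (hzbar n).le) (by simpa using hinf.add hpow)
  refine ⟨?_, fun zlim hzlim => ?_⟩
  · rw [cauchySeq_iff_tendsto_dist_atTop_0, ← prod_atTop_atTop_eq]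
    exact squeeze_zero (fun _ => dist_nonneg)
      (fun p => dist_le_add_glueDistSigma_add hiso _ _ _ _)
      (by simpa using ((hproj.comp tendsto_fst).add hglue).add (hproj.comp tendsto_snd))
  · simp only [glueDistSigma_self]
    refine squeeze_zero (fun _ => dist_nonneg)
      (fun n => (dist_triangle_right _ _ (φ (i n) (zbar n))).trans_eq ?_)
      (by simpa using (tendsto_const_nhds (x := zlim)).dist hzlim |>.add hproj)
    rw [(hiso _).dist_eq]

/-- Let `z n ∈ W (i n)` (with `i` strictly increasing) be a Cauchy
sequence for the glued pseudodistance `d`.  Then: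
(1) `d_{W (i n)}(z n, φ^{i n}(Z)) → 0`;
(2) if `z̄ n ∈ Z` are chosen so that
`dist (z n) (φ (i n) (z̄ n)) < d(z n, φ^{i n}(Z)) + 2⁻ⁿ`, then `z̄` is a Cauchy
sequence in `Z`, and if `z̄ n → z̄`, then `d(φ^{i n}(z̄), z n) → 0`. -/
theorem glueSigma_cauchy_across_pieces {Z : Type*} [MetricSpace Z]
    [CompleteSpace Z] [Nonempty Z] {W : ℕ → Type*} [∀ i, MetricSpace (W i)]
    [∀ i, CompleteSpace (W i)] (φ : ∀ i, Z → W i)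
    (hφ : ∀ i, ∀ x y : Z, dist (φ i x) (φ i y) = dist x y)
    (i : ℕ → ℕ) (hi : StrictMono i) (z : ∀ n : ℕ, W (i n))
    (hcauchy : ∀ ε > (0 : ℝ), ∃ N : ℕ, ∀ m n : ℕ, N ≤ m → N ≤ n →
      glueDistSigma φ ⟨i m, z m⟩ ⟨i n, z n⟩ < ε) :
    Tendsto (fun n => Metric.infDist (z n) (Set.range (φ (i n)))) atTop (nhds 0) ∧
    ∀ zbar : ℕ → Z,
      (∀ n, dist (z n) (φ (i n) (zbar n)) <
        Metric.infDist (z n) (Set.range (φ (i n))) + (2 : ℝ)⁻¹ ^ n) →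
      CauchySeq zbar ∧
      ∀ zlim : Z, Tendsto zbar atTop (nhds zlim) →
        Tendsto (fun n => glueDistSigma φ ⟨i n, φ (i n) zlim⟩ ⟨i n, z n⟩)
          atTop (nhds 0) :=
  glueSigma_cauchy_across_pieces_general φ hφ i hi z hcauchy
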